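/- arXiv:1102.0451 — 4 statements merged into one kernel-verified Lean document; each statement's English description precedes it below -/
import Mathlib

section
/- For any collusion strategy with parameters K_b = E_{x|b}[Ψ_b(x)] satisfying Σ_{y∈Q} θ_{y|σ} = 1 for all σ, the sum rule q * Σ_{b=0}^{c} K_b * P_1(b) = 1 holds. -/
/-- Generalized Beta function `B(v) = (∏ Γ(v_a)) / Γ(∑ v_a)`. -/
noncomputable def GBeta {n : ℕ} (v : Fin n → ℝ) : ℝ :=
  (∏ a, Real.Gamma (v a)) / Real.Gamma (∑ a, v a)

/-- Ordinary Beta function `B(x,y) = Γ(x)Γ(y)/Γ(x+y)`. -/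
noncomputable def Beta2 (x y : ℝ) : ℝ :=
  Real.Gamma x * Real.Gamma y / Real.Gamma (x + y)

/-! Since `Γ(x + n) = n! · multichoose x n · Γ(x)`, the summand indexed by `σ` (with `σ 0 = b`)
is `P(σ) θ_{0|σ}`, where `P(σ) = ∏ᵢ multichoose κ (σ i) / multichoose (qκ) c` is the symmetric
Dirichlet-multinomial law; summing over `b` gives the expectation of `θ_{0|σ}` under `P`.
As `P` is permutation invariant and `θ` is symbol-symmetric, this expectation is the same for every
symbol `y`, so `q` times it is the expectation of `∑_y θ_{y|σ} = 1`. That `P` has total mass one is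
the multivariate Chu–Vandermonde identity for `multichoose`. -/

open Finset Ring

namespace Ring

theorem factorial_mul_multichoose_eq_ascPochhammer_eval {R : Type*} [Semiring R]
    [BinomialRing R] (r : R) (n : ℕ) :
    n.factorial * multichoose r n = (ascPochhammer R n).eval r := by
  rw [← nsmul_eq_mul, factorial_nsmul_multichoose_eq_ascPochhammer,
    Polynomial.ascPochhammer_smeval_eq_eval]

-- Chu–Vandermonde at `-r, -s`, using `choose (-r) n = (-1)ⁿ • multichoose r n`.
theorem multichoose_add {R : Type*} [Ring R] [BinomialRing R] {r s : R} (h : Commute r s)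
    (k : ℕ) :
    multichoose (r + s) k = ∑ ij ∈ antidiagonal k, multichoose r ij.1 * multichoose s ij.2 := by
  have := add_choose_eq k h.neg_left.neg_right
  simp_rw [← neg_add, choose_neg', smul_mul_smul_comm] at this
  rw [sum_congr rfl fun ij hij => by
    rw [← Int.negOnePow_add, ← Nat.cast_add, mem_antidiagonal.mp hij], ← smul_sum] at this
  exact smul_left_cancel _ this

theorem multichoose_sum {R ι : Type*} [CommRing R] [BinomialRing R] [DecidableEq ι]
    (s : Finset ι) (v : ι → R) (n : ℕ) :
    multichoose (∑ i ∈ s, v i) n = ∑ f ∈ s.piAntidiag n, ∏ i ∈ s, multichoose (v i) (f i) := by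
  induction s using Finset.cons_induction generalizing n with
  | empty => cases n <;> simp [multichoose_zero_succ]
  | cons a s ha ih =>
    rw [sum_cons, multichoose_add (Commute.all _ _), piAntidiag_cons, sum_disjiUnion]
    refine sum_congr rfl fun p _ => ?_
    rw [ih, mul_sum, sum_map]
    refine sum_congr rfl fun f hf => ?_
    have hfa : f a = 0 := by_contra fun hne => ha ((mem_piAntidiag.mp hf).2 a hne)
    rw [prod_cons]
    congr 1
    · simp [hfa]
    · refine prod_congr rfl fun i hi => ?_
      simp [ne_of_mem_of_not_mem hi ha]

end Ring

namespace Real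

theorem multichoose_pos {x : ℝ} (hx : 0 < x) (n : ℕ) : 0 < multichoose x n := by
  have := ascPochhammer_pos n x hx
  rw [← factorial_mul_multichoose_eq_ascPochhammer_eval] at this
  exact pos_of_mul_pos_right this (Nat.cast_nonneg _)

theorem Gamma_add_nat_eq_ascPochhammer_eval_mul {x : ℝ} (hx : 0 < x) (n : ℕ) :
    Gamma (x + n) = (ascPochhammer ℝ n).eval x * Gamma x := by
  induction n with
  | zero => simp
  | succ n ih =>
    rw [Nat.cast_succ, ← add_assoc, Gamma_add_one (by positivity), ih, ascPochhammer_succ_eval]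
    ring

theorem Gamma_add_nat {x : ℝ} (hx : 0 < x) (n : ℕ) :
    Gamma (x + n) = n.factorial * multichoose x n * Gamma x := by
  rw [Gamma_add_nat_eq_ascPochhammer_eval_mul hx, factorial_mul_multichoose_eq_ascPochhammer_eval]

end Real

theorem multinomial_mul_GBeta_add_nat {n : ℕ} [NeZero n] {v : Fin n → ℝ} (hv : ∀ i, 0 < v i)
    (τ : Fin n → ℕ) :
    Nat.multinomial univ τ * GBeta (fun i => v i + τ i)
      = GBeta v * (∏ i, multichoose (v i) (τ i)) / multichoose (∑ i, v i) (∑ i, τ i) := by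
  have hsum : 0 < ∑ i, v i := sum_pos (fun i _ => hv i) univ_nonempty
  have hspec : (∏ i, ((τ i).factorial : ℝ)) * Nat.multinomial univ τ = (∑ i, τ i).factorial := by
    exact_mod_cast Nat.multinomial_spec univ τ
  unfold GBeta
  rw [sum_add_distrib, ← Nat.cast_sum, Real.Gamma_add_nat hsum,
    prod_congr rfl fun i _ => Real.Gamma_add_nat (hv i) (τ i), prod_mul_distrib, prod_mul_distrib,
    ← hspec]
  have := Real.multichoose_pos hsum (∑ i, τ i)
  have := (Real.Gamma_pos_of_pos hsum).ne'
  have : (∏ i, ((τ i).factorial : ℝ)) ≠ 0 := prod_ne_zero_iff.mpr fun i _ => by positivity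
  have : (Nat.multinomial univ τ : ℝ) ≠ 0 := by exact_mod_cast (Nat.multinomial_pos univ τ).ne'
  field_simp

theorem choose_mul_Beta2_add_nat {x y : ℝ} (hx : 0 < x) (hy : 0 < y) (b m : ℕ) :
    (b + m).choose b * Beta2 (x + b) (y + m)
      = Beta2 x y * (multichoose x b * multichoose y m) / multichoose (x + y) (b + m) := by
  have hxy : 0 < x + y := add_pos hx hy
  have hspec : ((b + m).choose b * b.factorial * m.factorial : ℝ) = (b + m).factorial := by
    have := Nat.choose_mul_factorial_mul_factorial (Nat.le_add_right b m)
    rw [Nat.add_sub_cancel_left] at this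
    exact_mod_cast this
  unfold Beta2
  rw [show x + b + (y + m) = x + y + ((b + m : ℕ) : ℝ) by push_cast; ring, Real.Gamma_add_nat hx,
    Real.Gamma_add_nat hy, Real.Gamma_add_nat hxy, ← hspec]
  have := Real.multichoose_pos hxy (b + m)
  have := (Real.Gamma_pos_of_pos hxy).ne'
  have : ((b + m).choose b : ℝ) ≠ 0 := by exact_mod_cast (Nat.choose_pos (Nat.le_add_right b m)).ne'
  field_simp

theorem GBeta_pos {n : ℕ} [NeZero n] {v : Fin n → ℝ} (hv : ∀ i, 0 < v i) : 0 < GBeta v :=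
  div_pos (prod_pos fun i _ => Real.Gamma_pos_of_pos (hv i))
    (Real.Gamma_pos_of_pos (sum_pos (fun i _ => hv i) univ_nonempty))

theorem Beta2_pos {x y : ℝ} (hx : 0 < x) (hy : 0 < y) : 0 < Beta2 x y := by
  unfold Beta2
  have := Real.Gamma_pos_of_pos hx
  have := Real.Gamma_pos_of_pos hy
  have := Real.Gamma_pos_of_pos (add_pos hx hy)
  positivity

theorem tsum_subtype_eq_sum_filter {α M : Type*} [AddCommMonoid M] [TopologicalSpace M]
    (s : Finset α) {p q : α → Prop} [DecidablePred q] (h : ∀ x, p x ↔ x ∈ s ∧ q x) (f : α → M) :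
    ∑' x : {x // p x}, f x = ∑ x ∈ s with q x, f x := by
  rw [← Finset.tsum_subtype]
  exact Equiv.tsum_eq (Equiv.subtypeEquivRight fun x => (h x).trans mem_filter.symm)
    fun x : {x // x ∈ s.filter q} => f x

section DirichletMultinomial

variable {ι : Type*} [Fintype ι]

-- Pólya-urn form of the symmetric Dirichlet-multinomial law of `σ`, after `∑ i, σ i` draws.
noncomputable def dirichletMultinomial (κ : ℝ) (σ : ι → ℕ) : ℝ :=
  (∏ i, multichoose κ (σ i)) / multichoose (Fintype.card ι * κ) (∑ i, σ i)

theorem dirichletMultinomial_comp_perm (κ : ℝ) (σ : ι → ℕ) (π : Equiv.Perm ι) :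
    dirichletMultinomial κ (σ ∘ π) = dirichletMultinomial κ σ := by
  unfold dirichletMultinomial
  rw [Function.comp_def, Equiv.prod_comp π fun i => multichoose κ (σ i), Equiv.sum_comp π σ]

variable [DecidableEq ι]

theorem sum_dirichletMultinomial [Nonempty ι] {κ : ℝ} (hκ : 0 < κ) (c : ℕ) :
    ∑ σ ∈ (univ : Finset ι).piAntidiag c, dirichletMultinomial κ σ = 1 := by
  have hden : 0 < multichoose (Fintype.card ι * κ) c :=
    Real.multichoose_pos (mul_pos (by exact_mod_cast Fintype.card_pos) hκ) c
  rw [sum_congr rfl fun σ hσ => by rw [dirichletMultinomial, (mem_piAntidiag.mp hσ).1],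
    ← sum_div, ← multichoose_sum univ (fun _ => κ) c, sum_const, card_univ, nsmul_eq_mul,
    div_self hden.ne']

theorem sum_piAntidiag_mul_apply_eq_of_perm {P : (ι → ℕ) → ℝ}
    (hP : ∀ σ (π : Equiv.Perm ι), P (σ ∘ π) = P σ) {θ : (ι → ℕ) → ι → ℝ}
    (hθ : ∀ (π : Equiv.Perm ι) σ y, θ (σ ∘ π) y = θ σ (π y)) (c : ℕ) (x y : ι) :
    ∑ σ ∈ univ.piAntidiag c, P σ * θ σ x = ∑ σ ∈ univ.piAntidiag c, P σ * θ σ y := by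
  have hmem : ∀ σ (π : Equiv.Perm ι), σ ∈ univ.piAntidiag c → σ ∘ π ∈ univ.piAntidiag c := by
    simp [Equiv.sum_comp]
  have hinv : ∀ σ : ι → ℕ, σ ∘ Equiv.swap x y ∘ Equiv.swap x y = σ := fun σ => by
    ext; simp
  refine sum_nbij' (· ∘ Equiv.swap x y) (· ∘ Equiv.swap x y) (fun σ hσ => hmem σ _ hσ)
    (fun σ hσ => hmem σ _ hσ) (fun σ _ => hinv σ) (fun σ _ => hinv σ) fun σ _ => ?_
  rw [hP, hθ, Equiv.swap_apply_right]

theorem card_mul_sum_dirichletMultinomial_mul_eq_one [Nonempty ι] {κ : ℝ} (hκ : 0 < κ)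
    {c : ℕ} {θ : (ι → ℕ) → ι → ℝ} (hθ₁ : ∀ σ : ι → ℕ, ∑ a, σ a = c → ∑ y, θ σ y = 1)
    (hθ : ∀ (π : Equiv.Perm ι) σ y, θ (σ ∘ π) y = θ σ (π y)) (x : ι) :
    Fintype.card ι * ∑ σ ∈ univ.piAntidiag c, dirichletMultinomial κ σ * θ σ x = 1 := by
  calc Fintype.card ι * ∑ σ ∈ univ.piAntidiag c, dirichletMultinomial κ σ * θ σ x
      = ∑ y, ∑ σ ∈ univ.piAntidiag c, dirichletMultinomial κ σ * θ σ y := by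
        simp [sum_piAntidiag_mul_apply_eq_of_perm (dirichletMultinomial_comp_perm κ) hθ c _ x]
    _ = ∑ σ ∈ univ.piAntidiag c, dirichletMultinomial κ σ * ∑ y, θ σ y := by
        rw [sum_comm]; simp_rw [mul_sum]
    _ = 1 := by
        rw [← sum_dirichletMultinomial (ι := ι) hκ c]
        exact sum_congr rfl fun σ hσ => by rw [hθ₁ σ (mem_piAntidiag.mp hσ).1, mul_one]

end DirichletMultinomial

-- The two factors are the paper's `P_{q-1}(x | b)` and `P_1(b)`.
theorem GBeta_mul_Beta2_eq_dirichletMultinomial {Q : ℕ} [NeZero Q] {κ : ℝ} (hκ : 0 < κ)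
    (σ : Fin (Q + 1) → ℕ) :
    ((Nat.multinomial univ (σ ∘ (0 : Fin (Q + 1)).succAbove) : ℝ)
        * GBeta (fun i : Fin Q => κ + σ ((0 : Fin (Q + 1)).succAbove i))
        / GBeta (fun _ : Fin Q => κ))
      * ((Nat.choose (∑ a, σ a) (σ 0) : ℝ)
        * Beta2 (κ + σ 0) (κ * Q + (((∑ a, σ a : ℕ) : ℝ) - σ 0)) / Beta2 κ (κ * Q))
      = dirichletMultinomial κ σ := by
  have hQκ : 0 < κ * Q := mul_pos hκ (by exact_mod_cast Nat.pos_of_neZero Q)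
  have hsplit : ∑ a, σ a = σ 0 + ∑ i : Fin Q, σ i.succ := Fin.sum_univ_succ σ
  have hκQ : ∑ _i : Fin Q, κ = κ * Q := by
    rw [sum_const, card_univ, Fintype.card_fin, nsmul_eq_mul, mul_comm]
  have hGBeta := multinomial_mul_GBeta_add_nat (v := fun _ => κ) (fun _ => hκ) (σ ∘ Fin.succ)
  have hBeta2 := choose_mul_Beta2_add_nat hκ hQκ (σ 0) (∑ i : Fin Q, σ i.succ)
  simp only [Function.comp_apply, hκQ] at hGBeta
  simp only [Fin.succAbove_zero]
  rw [hGBeta, hsplit, Nat.cast_add, add_sub_cancel_left, mul_div_assoc, hBeta2]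
  have hcard : ((Fintype.card (Fin (Q + 1)) : ℕ) : ℝ) * κ = κ + κ * Q := by
    rw [Fintype.card_fin]; push_cast; ring
  rw [dirichletMultinomial, Fin.prod_univ_succ, hsplit, hcard]
  have := (GBeta_pos fun _ : Fin Q => hκ).ne'
  have := (Beta2_pos hκ hQκ).ne'
  have := (Real.multichoose_pos hQκ (∑ i : Fin Q, σ i.succ)).ne'
  have := (Real.multichoose_pos (add_pos hκ hQκ) (σ 0 + ∑ i : Fin Q, σ i.succ)).ne'
  field_simp

theorem stmt_9_general (Q c : ℕ) (hQ : 1 ≤ Q) (κ : ℝ) (hκ : 0 < κ)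
    (θ : (Fin (Q + 1) → ℕ) → Fin (Q + 1) → ℝ)
    (hsum : ∀ σ : Fin (Q + 1) → ℕ, (∑ a, σ a) = c → ∑ y, θ σ y = 1)
    (hsymm : ∀ (π : Equiv.Perm (Fin (Q + 1))) (σ : Fin (Q + 1) → ℕ) (y : Fin (Q + 1)),
        θ (σ ∘ π) y = θ σ (π y)) :
    ((Q : ℝ) + 1) * ∑ b ∈ Finset.range (c + 1),
        (∑' σ : {σ : Fin (Q + 1) → ℕ // (∑ a, σ a) = c ∧ σ 0 = b},
            ((Nat.multinomial Finset.univ (σ.1 ∘ (0 : Fin (Q + 1)).succAbove) : ℝ)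
                * GBeta (fun i : Fin Q => κ + σ.1 ((0 : Fin (Q + 1)).succAbove i))
                / GBeta (fun _ : Fin Q => κ))
              * θ σ.1 0)
          * ((Nat.choose c b : ℝ)
              * Beta2 (κ + b) (κ * (Q : ℝ) + ((c : ℝ) - b)) / Beta2 κ (κ * (Q : ℝ)))
      = 1 := by
  have : NeZero Q := NeZero.of_pos hQ
  have hmaps : ∀ σ ∈ (univ : Finset (Fin (Q + 1))).piAntidiag c, σ 0 ∈ range (c + 1) :=
    fun σ hσ => mem_range_succ_iff.mpr
      ((mem_piAntidiag.mp hσ).1 ▸ single_le_sum (fun _ _ => Nat.zero_le _) (mem_univ 0))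
  refine Eq.trans ?_ (card_mul_sum_dirichletMultinomial_mul_eq_one hκ hsum hsymm 0)
  rw [Fintype.card_fin, Nat.cast_succ, ← sum_fiberwise_of_maps_to hmaps]
  congr 1
  refine sum_congr rfl fun b _ => ?_
  rw [← tsum_mul_right, ← tsum_subtype_eq_sum_filter (p := fun σ => ∑ a, σ a = c ∧ σ 0 = b) _
    (fun σ => by simp [mem_piAntidiag]) fun σ => dirichletMultinomial κ σ * θ σ 0]
  refine tsum_congr fun ⟨σ, hσc, hσb⟩ => ?_
  subst hσc hσb
  rw [mul_right_comm, GBeta_mul_Beta2_eq_dirichletMultinomial hκ]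

theorem stmt_9 (Q c : ℕ) (hQ : 1 ≤ Q) (hc : 1 ≤ c) (κ : ℝ) (hκ : 0 < κ)
    (θ : (Fin (Q + 1) → ℕ) → Fin (Q + 1) → ℝ)
    (hsum : ∀ σ : Fin (Q + 1) → ℕ, (∑ a, σ a) = c → ∑ y, θ σ y = 1)
    (hsymm : ∀ (π : Equiv.Perm (Fin (Q + 1))) (σ : Fin (Q + 1) → ℕ) (y : Fin (Q + 1)),
        θ (σ ∘ π) y = θ σ (π y)) :
    ((Q : ℝ) + 1) * ∑ b ∈ Finset.range (c + 1),
        (∑' σ : {σ : Fin (Q + 1) → ℕ // (∑ a, σ a) = c ∧ σ 0 = b},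
            ((Nat.multinomial Finset.univ (σ.1 ∘ (0 : Fin (Q + 1)).succAbove) : ℝ)
                * GBeta (fun i : Fin Q => κ + σ.1 ((0 : Fin (Q + 1)).succAbove i))
                / GBeta (fun _ : Fin Q => κ))
              * θ σ.1 0)
          * ((Nat.choose c b : ℝ)
              * Beta2 (κ + b) (κ * (Q : ℝ) + ((c : ℝ) - b)) / Beta2 κ (κ * (Q : ℝ)))
      = 1 :=
  stmt_9_general Q c hQ κ hκ θ hsum hsymm
end

section
/- Define the asymptotic score function T(x) = (1/2 - κ + x(κq - 1)) / sqrt(x(1-x)) for x ∈ (0,1). If 0 < κ < 1/(2(q-1)) with q ≥ 2, then T is strictly monotonically decreasing on (0,1). -/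
/-!
Splitting the numerator as `a + x b = a (1 - x) + (a + b) x` writes the score as
`a √((1 - x) / x) + (a + b) √(x / (1 - x))`: for `a > 0` the first term strictly decreases and for
`a + b ≤ 0` the second does not increase. With `a = 1/2 - κ` and `a + b = κ (q - 1) - 1/2`, both
signs follow from `κ < 1 / (2 (q - 1)) ≤ 1/2`.
-/

open Set Real

lemma strictAntiOn_sqrt_one_sub_div_self :
    StrictAntiOn (fun x : ℝ => √((1 - x) / x)) (Ioc 0 1) := by
  intro x hx y hy hxy
  refine sqrt_lt_sqrt (div_nonneg (sub_nonneg.2 hy.2) hy.1.le) ?_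
  rw [div_lt_div_iff₀ hy.1 hx.1]
  linarith

lemma monotoneOn_sqrt_div_one_sub_self :
    MonotoneOn (fun x : ℝ => √(x / (1 - x))) (Iio 1) := by
  intro x hx y hy hxy
  refine sqrt_le_sqrt ?_
  rw [div_le_div_iff₀ (sub_pos.2 hx) (sub_pos.2 hy)]
  linarith

lemma affine_div_sqrt_mul_one_sub_eq {x : ℝ} (hx : x ∈ Ioo 0 1) (a b : ℝ) :
    (a + x * b) / √(x * (1 - x)) = a * √((1 - x) / x) + (a + b) * √(x / (1 - x)) := by
  obtain ⟨hx0, hx1⟩ := hx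
  have hx1' : 0 < 1 - x := sub_pos.2 hx1
  rw [sqrt_mul hx0.le, sqrt_div hx1'.le, sqrt_div hx0.le]
  have hs : 0 < √x := sqrt_pos.2 hx0
  have ht : 0 < √(1 - x) := sqrt_pos.2 hx1'
  field_simp
  rw [sq_sqrt hx0.le, sq_sqrt hx1'.le]
  ring

theorem strictAntiOn_affine_div_sqrt_mul_one_sub {a b : ℝ} (ha : 0 < a) (hab : a + b ≤ 0) :
    StrictAntiOn (fun x : ℝ => (a + x * b) / √(x * (1 - x))) (Ioo 0 1) := by
  have hdecr : StrictAntiOn (fun x : ℝ => a * √((1 - x) / x)) (Ioo 0 1) :=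
    fun x hx y hy hxy => mul_lt_mul_of_pos_left
      (strictAntiOn_sqrt_one_sub_div_self ⟨hx.1, hx.2.le⟩ ⟨hy.1, hy.2.le⟩ hxy) ha
  have hnonincr : AntitoneOn (fun x : ℝ => (a + b) * √(x / (1 - x))) (Ioo 0 1) :=
    fun x hx y hy hxy => mul_le_mul_of_nonpos_left
      (monotoneOn_sqrt_div_one_sub_self hx.2 hy.2 hxy) hab
  refine (hdecr.add_antitone hnonincr).congr fun x hx => ?_
  exact (affine_div_sqrt_mul_one_sub_eq hx a b).symm

theorem stmt_10_general (q : ℕ) (hq : 2 ≤ q) (κ : ℝ)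
    (hκ2 : κ < 1 / (2 * ((q : ℝ) - 1))) :
    StrictAntiOn (fun x : ℝ => (1/2 - κ + x * (κ * q - 1)) / Real.sqrt (x * (1 - x)))
      (Set.Ioo 0 1) := by
  have hq' : (1 : ℝ) ≤ q - 1 := by
    have : (2 : ℝ) ≤ q := by exact_mod_cast hq
    linarith
  have hκq : κ * (2 * (q - 1)) < 1 := (lt_div_iff₀ (by positivity)).1 hκ2
  apply strictAntiOn_affine_div_sqrt_mul_one_sub <;> nlinarith

theorem stmt_10 (q : ℕ) (hq : 2 ≤ q) (κ : ℝ) (hκ : 0 < κ)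
    (hκ2 : κ < 1 / (2 * ((q : ℝ) - 1))) :
    StrictAntiOn (fun x : ℝ => (1/2 - κ + x * (κ * q - 1)) / Real.sqrt (x * (1 - x)))
      (Set.Ioo 0 1) :=
  stmt_10_general q hq κ hκ2
end

section
/- (Theorem 2, class-2 strategies.) Under the hypotheses of Theorem 1 with Ψ_b(x) = (w(b)/(ℓ+1)) Π_{k=1}^{r} W(b,z_k) (so W independent of ℓ), writing G_{ba} = Σ_{z∈{0,...,c-b}\{b}} Γ(κ+z) W(b,z)/(τ_b^{az} z!), one has K_b = (b!(c-b)! w(b) / (q N_b Γ(κ+b) Γ(c-b+κ(q-1)) B(κ·1_{q-1}))) * Σ_{a=0}^{N_b-1} τ_b^{ac} [ (G_{ba}+v_{ba})^q − G_{ba}^q ]. -/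
open Finset
open scoped Nat

section Tuples

variable {n : ℕ}

lemma Fin.card_filter_insertNth_eq {α : Type*} [DecidableEq α] (i : Fin (n + 1)) (a : α)
    (x : Fin n → α) :
    #{j | Fin.insertNth (α := fun _ => α) i a x j = a} = #{j | x j = a} + 1 := by
  simp only [card_filter, Fin.sum_univ_succAbove _ i, Fin.insertNth_apply_same,
    Fin.insertNth_apply_succAbove, if_true, add_comm]

lemma Fin.prod_comp_insertNth {α M : Type*} [CommMonoid M] (g : α → M) (i : Fin (n + 1)) (a : α)
    (x : Fin n → α) : ∏ j, g (Fin.insertNth (α := fun _ => α) i a x j) = g a * ∏ j, g (x j) := by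
  simp [Fin.prod_univ_succAbove _ i]

lemma sum_filter_apply_eq_sum_insertNth {M : Type*} [AddCommMonoid M] (i : Fin (n + 1))
    (b s : ℕ) (F : (Fin (n + 1) → ℕ) → M) :
    ∑ y ∈ Nat.antidiagonalTuple (n + 1) (b + s) with y i = b, F y
      = ∑ x ∈ Nat.antidiagonalTuple n s, F (Fin.insertNth i b x) := by
  symm
  refine sum_nbij' (Fin.insertNth (α := fun _ => ℕ) i b) (Fin.removeNth i) ?_ ?_ ?_ ?_
    (fun _ _ => rfl)
  · intro x hx
    rw [Nat.mem_antidiagonalTuple] at hx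
    simp [Nat.mem_antidiagonalTuple, Fin.sum_insertNth, hx]
  · intro y hy
    rw [mem_filter, Nat.mem_antidiagonalTuple] at hy
    rw [Nat.mem_antidiagonalTuple]
    have := Fin.sum_insertNth i b (Fin.removeNth i y)
    rw [← hy.2, Fin.insertNth_self_removeNth] at this
    omega
  · intro x _
    simp
  · intro y hy
    rw [← (mem_filter.1 hy).2, Fin.insertNth_self_removeNth]

theorem sum_antidiagonalTuple_filter_exists_eq {K : Type*} [Field K] [CharZero K] (b s : ℕ)
    (g : ℕ → K) :
    ∑ y ∈ Nat.antidiagonalTuple (n + 1) (b + s) with ∃ i, y i = b, ∏ i, g (y i)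
      = (n + 1) * g b *
          ∑ x ∈ Nat.antidiagonalTuple n s, (∏ i, g (x i)) / (#{i | x i = b} + 1) := by
  set A := Nat.antidiagonalTuple (n + 1) (b + s)
  calc ∑ y ∈ A with ∃ i, y i = b, ∏ i, g (y i)
      = ∑ y ∈ A with ∃ i, y i = b, ∑ i with y i = b, (∏ j, g (y j)) / #{j | y j = b} := by
        refine sum_congr rfl fun y hy => ?_
        obtain ⟨i, hi⟩ := (mem_filter.1 hy).2
        have : (#{j | y j = b} : K) ≠ 0 :=
          Nat.cast_ne_zero.2 (card_ne_zero_of_mem (mem_filter.2 ⟨mem_univ i, hi⟩))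
        rw [sum_const, nsmul_eq_mul, mul_div_cancel₀ _ this]
    _ = ∑ i, ∑ y ∈ A with y i = b, (∏ j, g (y j)) / #{j | y j = b} :=
        sum_comm' fun y i => by simp only [mem_filter, mem_univ, true_and, and_true]; grind
    _ = ∑ _i : Fin (n + 1), ∑ x ∈ Nat.antidiagonalTuple n s,
          g b * ((∏ j, g (x j)) / (#{j | x j = b} + 1)) := by
        refine sum_congr rfl fun i _ => ?_
        rw [sum_filter_apply_eq_sum_insertNth]
        refine sum_congr rfl fun x _ => ?_
        rw [Fin.prod_comp_insertNth, Fin.card_filter_insertNth_eq, Nat.cast_succ, mul_div_assoc]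
    _ = _ := by
        rw [sum_const, card_univ, Fintype.card_fin, nsmul_eq_mul, ← mul_sum, Nat.cast_succ,
          mul_assoc]

lemma Fintype.mem_piFinset_insert_sdiff {ι α : Type*} [Fintype ι] [DecidableEq ι]
    [DecidableEq α] {b : α} {S : Finset α} (hb : b ∉ S) {y : ι → α} :
    y ∈ Fintype.piFinset (fun _ => insert b S) \ Fintype.piFinset (fun _ => S) ↔
      (∀ i, y i ∈ insert b S) ∧ ∃ i, y i = b := by
  simp only [mem_sdiff, Fintype.mem_piFinset, not_forall]
  constructor
  · rintro ⟨h, i, hi⟩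
    exact ⟨h, i, by simpa [hi] using h i⟩
  · rintro ⟨h, i, hi⟩
    exact ⟨h, i, hi ▸ hb⟩

lemma sum_le_card_filter_eq_mul_add {ι : Type*} [Fintype ι] (y : ι → ℕ) (b m : ℕ)
    (h : ∀ i, y i ≠ b → y i ≤ m) :
    ∑ i, y i ≤ #{i | y i = b} * b + #{i | y i ≠ b} * m := by
  rw [← sum_filter_add_sum_filter_not univ (fun i => y i = b)]
  exact add_le_add (sum_le_card_nsmul _ _ _ fun i hi => (mem_filter.1 hi).2.le)
    (sum_le_card_nsmul _ _ _ fun i hi => h i (mem_filter.1 hi).2)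

end Tuples

lemma abs_sub_sum_lt_of_mem_piFinset_insert_sdiff {q b c N : ℕ} (hbc : b ≤ c)
    (hN : max ((c : ℤ) - b) (max |(c : ℤ) - b * q| (((c : ℤ) - b) * ((q : ℤ) - 2))) < N)
    {y : Fin q → ℕ}
    (hy : y ∈ Fintype.piFinset (fun _ => insert b ((range (c - b + 1)).erase b)) \
      Fintype.piFinset (fun _ => (range (c - b + 1)).erase b)) :
    |(c : ℤ) - (∑ i, y i : ℕ)| < N := by
  obtain ⟨hmem, i₀, hi₀⟩ := (Fintype.mem_piFinset_insert_sdiff (notMem_erase _ _)).1 hy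
  have hle : ∀ i, y i ≠ b → y i ≤ c - b := fun i hi => by
    have := hmem i
    simp only [mem_insert, mem_erase, mem_range] at this
    omega
  have hlow : b ≤ ∑ i, y i := hi₀ ▸ single_le_sum (fun _ _ => Nat.zero_le _) (mem_univ i₀)
  have hup := sum_le_card_filter_eq_mul_add y b (c - b) hle
  have hℓ : 1 ≤ #{i | y i = b} := card_pos.2 ⟨i₀, mem_filter.2 ⟨mem_univ _, hi₀⟩⟩
  have hq : #{i | y i = b} + #{i | y i ≠ b} = q := by
    simpa using card_filter_add_card_filter_not (s := univ) (fun i => y i = b)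
  generalize #{i | y i = b} = ℓ, #{i | y i ≠ b} = ℓ', ∑ i, y i = t at *
  subst hq
  simp only [max_lt_iff, abs_lt] at hN ⊢
  push_cast [Nat.cast_sub hbc] at *
  zify [hbc] at hup hlow
  refine ⟨?_, by omega⟩
  -- `t - c` is affine in `ℓ`, so it is bounded by its values at `ℓ = 1` and `ℓ = q`
  rcases le_total (b : ℤ) (c - b) with h | h
  · nlinarith [mul_nonneg (by omega : (0 : ℤ) ≤ ℓ - 1) (by omega : (0 : ℤ) ≤ (c - b) - b)]
  · nlinarith [mul_nonneg (by omega : (0 : ℤ) ≤ ℓ') (by omega : (0 : ℤ) ≤ b - (c - b))]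

lemma filter_piFinset_insert_sdiff_sum_eq {q b c : ℕ} (hbc : b ≤ c) :
    {y ∈ Fintype.piFinset (fun _ : Fin q => insert b ((range (c - b + 1)).erase b)) \
        Fintype.piFinset (fun _ => (range (c - b + 1)).erase b) | ∑ i, y i = c}
      = {y ∈ Nat.antidiagonalTuple q c | ∃ i, y i = b} := by
  ext y
  rw [mem_filter, mem_filter, Fintype.mem_piFinset_insert_sdiff (notMem_erase _ _),
    Nat.mem_antidiagonalTuple]
  constructor
  · rintro ⟨⟨-, hex⟩, hsum⟩
    exact ⟨hsum, hex⟩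
  · rintro ⟨hsum, j, hj⟩
    refine ⟨⟨fun i => ?_, j, hj⟩, hsum⟩
    rw [mem_insert, mem_erase, mem_range]
    by_cases hib : y i = b
    · exact Or.inl hib
    · have := add_le_sum (fun k _ => Nat.zero_le (y k)) (mem_univ i) (mem_univ j)
        (fun hij => hib (hij ▸ hj))
      omega

section RootsOfUnity

variable {K : Type*} [Field K] {ω : K} {N : ℕ}

lemma IsPrimitiveRoot.sum_range_pow_mul_div_pow_mul (hω : IsPrimitiveRoot ω N) {c t : ℕ}
    (h : |(c : ℤ) - t| < N) :
    ∑ a ∈ range N, ω ^ (a * c) / ω ^ (a * t) = if t = c then (N : K) else 0 := by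
  have hN : N ≠ 0 := by
    have := abs_nonneg ((c : ℤ) - t)
    omega
  have hterm : ∀ a : ℕ, ω ^ (a * c) / ω ^ (a * t) = (ω ^ ((c : ℤ) - t)) ^ a := fun a => by
    rw [← zpow_natCast, ← zpow_natCast, ← zpow_sub₀ (hω.ne_zero hN), ← zpow_natCast, ← zpow_mul]
    push_cast
    ring_nf
  simp_rw [hterm]
  split_ifs with htc
  · simp [htc]
  · have hne : ω ^ ((c : ℤ) - t) ≠ 1 := by
      rw [Ne, hω.zpow_eq_one_iff_dvd]
      intro hdvd
      have := Int.le_of_dvd (abs_pos.2 (by omega)) ((dvd_abs _ _).2 hdvd)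
      omega
    rw [geom_sum_eq hne, ← zpow_natCast, ← zpow_mul, mul_comm, zpow_mul, zpow_natCast,
      hω.pow_eq_one, one_zpow, sub_self, zero_div]

lemma sum_div_pow_pow_eq_sum_piFinset (ω : K) (a q : ℕ) (P : Finset ℕ) (g : ℕ → K) :
    (∑ z ∈ P, g z / ω ^ (a * z)) ^ q
      = ∑ y ∈ Fintype.piFinset fun _ : Fin q => P, (∏ i, g (y i)) / ω ^ (a * ∑ i, y i) := by
  rw [sum_pow']
  refine sum_congr rfl fun y _ => ?_
  rw [prod_div_distrib, prod_pow_eq_pow_sum, mul_sum]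

lemma IsPrimitiveRoot.sum_range_mul_pow_sub_pow_eq_filter (hω : IsPrimitiveRoot ω N) (c q : ℕ)
    {S T : Finset ℕ} (hST : S ⊆ T) (g : ℕ → K)
    (hbound : ∀ y ∈ Fintype.piFinset (fun _ : Fin q => T) \ Fintype.piFinset (fun _ => S),
      |(c : ℤ) - (∑ i, y i : ℕ)| < N) :
    ∑ a ∈ range N, ω ^ (a * c) *
        ((∑ z ∈ T, g z / ω ^ (a * z)) ^ q - (∑ z ∈ S, g z / ω ^ (a * z)) ^ q)
      = N * ∑ y ∈ Fintype.piFinset (fun _ : Fin q => T) \ Fintype.piFinset (fun _ => S)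
          with ∑ i, y i = c, ∏ i, g (y i) := by
  set D := Fintype.piFinset (fun _ : Fin q => T) \ Fintype.piFinset (fun _ => S)
  calc _ = ∑ a ∈ range N, ∑ y ∈ D, (∏ i, g (y i)) * (ω ^ (a * c) / ω ^ (a * ∑ i, y i)) := by
        refine sum_congr rfl fun a _ => ?_
        rw [sum_div_pow_pow_eq_sum_piFinset, sum_div_pow_pow_eq_sum_piFinset,
          ← sum_sdiff_eq_sub (Fintype.piFinset_subset _ _ fun _ => hST), mul_sum]
        exact sum_congr rfl fun y _ => by ring
    _ = ∑ y ∈ D, (∏ i, g (y i)) * if ∑ i, y i = c then (N : K) else 0 := by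
        rw [sum_comm]
        refine sum_congr rfl fun y hy => ?_
        rw [← mul_sum, hω.sum_range_pow_mul_div_pow_mul (hbound y hy)]
    _ = _ := by
        rw [mul_sum, sum_filter]
        refine sum_congr rfl fun y _ => ?_
        split_ifs <;> ring

theorem IsPrimitiveRoot.sum_range_mul_pow_sub_pow_eq_antidiagonalTuple [CharZero K]
    (hω : IsPrimitiveRoot ω N) {q b c : ℕ} (hq : q ≠ 0) (hbc : b ≤ c)
    (hN : max ((c : ℤ) - b) (max |(c : ℤ) - b * q| (((c : ℤ) - b) * ((q : ℤ) - 2))) < N)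
    (g : ℕ → K) :
    ∑ a ∈ range N, ω ^ (a * c) *
        ((∑ z ∈ (range (c - b + 1)).erase b, g z / ω ^ (a * z) + g b / ω ^ (a * b)) ^ q
          - (∑ z ∈ (range (c - b + 1)).erase b, g z / ω ^ (a * z)) ^ q)
      = N * (q * g b * ∑ x ∈ Nat.antidiagonalTuple (q - 1) (c - b),
          (∏ i, g (x i)) / (#{i | x i = b} + 1)) := by
  have hinsert : ∀ a, ∑ z ∈ (range (c - b + 1)).erase b, g z / ω ^ (a * z) + g b / ω ^ (a * b)
      = ∑ z ∈ insert b ((range (c - b + 1)).erase b), g z / ω ^ (a * z) := fun a => by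
    rw [sum_insert (notMem_erase b _), add_comm]
  simp_rw [hinsert]
  rw [hω.sum_range_mul_pow_sub_pow_eq_filter c q (subset_insert _ _) g
      fun y hy => abs_sub_sum_lt_of_mem_piFinset_insert_sdiff hbc hN hy,
    filter_piFinset_insert_sdiff_sum_eq hbc]
  obtain ⟨n, rfl⟩ : ∃ n, q = n + 1 := ⟨q - 1, by omega⟩
  have hcount := sum_antidiagonalTuple_filter_exists_eq (n := n) b (c - b) g
  rw [Nat.add_sub_cancel' hbc] at hcount
  rw [hcount, Nat.add_sub_cancel, Nat.cast_succ]

end RootsOfUnity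

lemma tsum_subtype_sum_eq_sum_antidiagonalTuple {α : Type*} [AddCommMonoid α]
    [TopologicalSpace α] (n s : ℕ) (f : (Fin n → ℕ) → α) :
    ∑' x : {x : Fin n → ℕ // ∑ i, x i = s}, f x = ∑ x ∈ Nat.antidiagonalTuple n s, f x := by
  rw [← Finset.tsum_subtype]
  exact (Equiv.subtypeEquivRight fun _ => Nat.mem_antidiagonalTuple.symm).tsum_eq
    (fun x : {x // x ∈ Nat.antidiagonalTuple n s} => f x)

lemma multinomial_mul_GBeta {n : ℕ} (κ : ℝ) (x : Fin n → ℕ) :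
    (Nat.multinomial univ x : ℝ) * GBeta (fun i => κ + x i)
      = (∑ i, x i)! * (∏ i, Real.Gamma (κ + x i) / (x i)!)
          / Real.Gamma ((∑ i, x i : ℕ) + κ * n) := by
  have hspec : (∏ i, ((x i)! : ℝ)) * Nat.multinomial univ x = (∑ i, x i)! := by
    exact_mod_cast Nat.multinomial_spec univ x
  have hpos : (∏ i, ((x i)! : ℝ)) ≠ 0 := by positivity
  rw [GBeta, sum_add_distrib, sum_const, card_univ, Fintype.card_fin, nsmul_eq_mul,
    prod_div_distrib, ← hspec, add_comm _ (∑ i, _), mul_comm (n : ℝ)]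
  push_cast
  field_simp

/-- The coefficient `g z` of `τ_b ^ (-a z)` in `G_{ba} + v_{ba}`. -/
noncomputable def gammaWeight (κ : ℝ) (b : ℕ) (W : ℕ → ℝ) (z : ℕ) : ℝ :=
  Real.Gamma (κ + z) / z ! * if z = b then 1 else W z

lemma gammaWeight_self (κ : ℝ) (b : ℕ) (W : ℕ → ℝ) :
    gammaWeight κ b W b = Real.Gamma (κ + b) / b ! := by
  simp [gammaWeight]

lemma gammaWeight_of_ne {κ : ℝ} {b z : ℕ} (W : ℕ → ℝ) (hz : z ≠ b) :
    gammaWeight κ b W z = Real.Gamma (κ + z) * W z / z ! := by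
  rw [gammaWeight, if_neg hz, div_mul_eq_mul_div]

lemma multinomial_mul_GBeta_div_mul_eq {n s : ℕ} (κ : ℝ) (b : ℕ) (w : ℝ) (W : ℕ → ℝ)
    {x : Fin n → ℕ} (hx : ∑ i, x i = s) :
    (Nat.multinomial univ x : ℝ) * GBeta (fun i => κ + x i) / GBeta (fun _ : Fin n => κ)
        * (w / (#{i | x i = b} + 1) * ∏ i ∈ univ with x i ≠ b, W (x i))
      = s ! * w / (Real.Gamma (s + κ * n) * GBeta (fun _ : Fin n => κ))
        * ((∏ i, gammaWeight κ b W (x i)) / (#{i | x i = b} + 1)) := by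
  have hprod : ∏ i, gammaWeight κ b W (x i)
      = (∏ i, Real.Gamma (κ + x i) / (x i)!) * ∏ i ∈ univ with x i ≠ b, W (x i) := by
    simp only [gammaWeight, prod_mul_distrib, prod_ite, prod_const_one, one_mul, ne_eq]
  rw [hprod, multinomial_mul_GBeta, hx]
  ring

lemma tsum_multinomial_mul_GBeta_eq (n s : ℕ) (κ : ℝ) (b : ℕ) (w : ℝ) (W : ℕ → ℝ) :
    ∑' x : {x : Fin n → ℕ // ∑ i, x i = s},
        (Nat.multinomial univ x.1 : ℝ) * GBeta (fun i => κ + x.1 i) / GBeta (fun _ : Fin n => κ)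
          * (w / (#{i | x.1 i = b} + 1) * ∏ i ∈ univ with x.1 i ≠ b, W (x.1 i))
      = s ! * w / (Real.Gamma (s + κ * n) * GBeta (fun _ : Fin n => κ))
        * ∑ x ∈ Nat.antidiagonalTuple n s,
            (∏ i, gammaWeight κ b W (x i)) / (#{i | x i = b} + 1) := by
  rw [← tsum_subtype_sum_eq_sum_antidiagonalTuple, ← tsum_mul_left]
  exact tsum_congr fun x => multinomial_mul_GBeta_div_mul_eq κ b w W x.2

theorem stmt_17_general (q c b : ℕ) (hq : 2 ≤ q) (hbc : b ≤ c)
    (κ : ℝ) (hκ : 0 < κ) (w : ℕ → ℝ) (W : ℕ → ℕ → ℝ)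
    (Nb : ℕ)
    (hNb : max ((c : ℤ) - b) (max |(c : ℤ) - b * q| (((c : ℤ) - b) * ((q : ℤ) - 2)))
        < (Nb : ℤ)) :
    ((∑' x : {x : Fin (q - 1) → ℕ // ∑ i, x i = c - b},
        ((Nat.multinomial Finset.univ x.1 : ℝ)
            * GBeta (fun i => κ + x.1 i) / GBeta (fun _ : Fin (q - 1) => κ))
          * ((w b / ((Finset.univ.filter (fun i => x.1 i = b)).card + 1))
              * ∏ i ∈ Finset.univ.filter (fun i => x.1 i ≠ b), W b (x.1 i)) : ℝ) : ℂ)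
      = (((Nat.factorial b : ℂ) * (Nat.factorial (c - b) : ℂ) * ((w b : ℝ) : ℂ))
            / ((q : ℂ) * (Nb : ℂ)
                * ((Real.Gamma (κ + b) * Real.Gamma (((c : ℝ) - b) + κ * ((q : ℝ) - 1))
                      * GBeta (fun _ : Fin (q - 1) => κ) : ℝ) : ℂ)))
          * ∑ a ∈ Finset.range Nb,
              Complex.exp (2 * Real.pi * Complex.I / Nb) ^ (a * c)
                * (((∑ z ∈ (Finset.range (c - b + 1)).erase b,
                        ((Real.Gamma (κ + z) * W b z : ℝ) : ℂ)
                          / (Complex.exp (2 * Real.pi * Complex.I / Nb) ^ (a * z)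
                              * (Nat.factorial z : ℂ)))
                      + ((Real.Gamma (κ + b) : ℝ) : ℂ)
                          / (Complex.exp (2 * Real.pi * Complex.I / Nb) ^ (a * b)
                              * (Nat.factorial b : ℂ))) ^ q
                    - (∑ z ∈ (Finset.range (c - b + 1)).erase b,
                        ((Real.Gamma (κ + z) * W b z : ℝ) : ℂ)
                          / (Complex.exp (2 * Real.pi * Complex.I / Nb) ^ (a * z)
                              * (Nat.factorial z : ℂ))) ^ q) := by
  have hNb0 : Nb ≠ 0 := by
    have := le_max_left ((c : ℤ) - b) (max |(c : ℤ) - b * q| (((c : ℤ) - b) * ((q : ℤ) - 2)))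
    omega
  set ω := Complex.exp (2 * Real.pi * Complex.I / Nb)
  have hcoeff : ∀ a z, z ≠ b → ((Real.Gamma (κ + z) * W b z : ℝ) : ℂ) / (ω ^ (a * z) * z !)
      = gammaWeight κ b (W b) z / ω ^ (a * z) :=
    fun a z hz => by rw [gammaWeight_of_ne _ hz]; push_cast; ring
  have hcoeff_self : ∀ a, ((Real.Gamma (κ + b) : ℝ) : ℂ) / (ω ^ (a * b) * b !)
      = gammaWeight κ b (W b) b / ω ^ (a * b) :=
    fun a => by rw [gammaWeight_self]; push_cast; ring
  have hΓarg : ((c - b : ℕ) : ℝ) + κ * ((q - 1 : ℕ) : ℝ) = c - b + κ * (q - 1) := by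
    push_cast [Nat.cast_sub hbc, Nat.cast_sub (by omega : 1 ≤ q)]
    ring
  rw [sum_congr rfl fun a _ => by
      rw [sum_congr rfl fun z hz => hcoeff a z (ne_of_mem_erase hz), hcoeff_self],
    (Complex.isPrimitiveRoot_exp Nb hNb0).sum_range_mul_pow_sub_pow_eq_antidiagonalTuple
      (by omega) hbc hNb (fun z => (gammaWeight κ b (W b) z : ℂ)),
    tsum_multinomial_mul_GBeta_eq, hΓarg, gammaWeight_self]
  have hqC : (q : ℂ) ≠ 0 := by exact_mod_cast (by omega : q ≠ 0)
  have hΓC : (Real.Gamma (κ + b) : ℂ) ≠ 0 := by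
    exact_mod_cast (Real.Gamma_pos_of_pos (by positivity)).ne'
  have hbC : (b ! : ℂ) ≠ 0 := by exact_mod_cast b.factorial_ne_zero
  push_cast
  field_simp

theorem stmt_17 (q c b : ℕ) (hq : 2 ≤ q) (hc : 1 ≤ c) (hb : 1 ≤ b) (hbc : b ≤ c)
    (κ : ℝ) (hκ : 0 < κ) (w : ℕ → ℝ) (W : ℕ → ℕ → ℝ)
    (Nb : ℕ)
    (hNb : max ((c : ℤ) - b) (max |(c : ℤ) - b * q| (((c : ℤ) - b) * ((q : ℤ) - 2)))
        < (Nb : ℤ)) :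
    ((∑' x : {x : Fin (q - 1) → ℕ // ∑ i, x i = c - b},
        ((Nat.multinomial Finset.univ x.1 : ℝ)
            * GBeta (fun i => κ + x.1 i) / GBeta (fun _ : Fin (q - 1) => κ))
          * ((w b / ((Finset.univ.filter (fun i => x.1 i = b)).card + 1))
              * ∏ i ∈ Finset.univ.filter (fun i => x.1 i ≠ b), W b (x.1 i)) : ℝ) : ℂ)
      = (((Nat.factorial b : ℂ) * (Nat.factorial (c - b) : ℂ) * ((w b : ℝ) : ℂ))
            / ((q : ℂ) * (Nb : ℂ)
                * ((Real.Gamma (κ + b) * Real.Gamma (((c : ℝ) - b) + κ * ((q : ℝ) - 1))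
                      * GBeta (fun _ : Fin (q - 1) => κ) : ℝ) : ℂ)))
          * ∑ a ∈ Finset.range Nb,
              Complex.exp (2 * Real.pi * Complex.I / Nb) ^ (a * c)
                * (((∑ z ∈ (Finset.range (c - b + 1)).erase b,
                        ((Real.Gamma (κ + z) * W b z : ℝ) : ℂ)
                          / (Complex.exp (2 * Real.pi * Complex.I / Nb) ^ (a * z)
                              * (Nat.factorial z : ℂ)))
                      + ((Real.Gamma (κ + b) : ℝ) : ℂ)
                          / (Complex.exp (2 * Real.pi * Complex.I / Nb) ^ (a * b)
                              * (Nat.factorial b : ℂ))) ^ q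
                    - (∑ z ∈ (Finset.range (c - b + 1)).erase b,
                        ((Real.Gamma (κ + z) * W b z : ℝ) : ℂ)
                          / (Complex.exp (2 * Real.pi * Complex.I / Nb) ^ (a * z)
                              * (Nat.factorial z : ℂ))) ^ q) :=
  stmt_17_general q c b hq hbc κ hκ w W Nb hNb
end

section
/- Let T : {0,1,...,c} → ℝ be injective, and define the μ̃-minimizing attack by θ_{y|σ} = 1/N if T(σ_y) = min_{α: σ_α > 0} T(σ_α) where N = |{α : σ_α = σ_y}| counts symbols attaining the minimum, and θ_{y|σ} = 0 otherwise (with the convention that symbols with σ_α = 0 are never chosen). Then this strategy belongs to class 3: Ψ_b(x) = (1/(ℓ+1)) Π_{k=1}^{r} W(b, z_k) where W(b,z) ∈ {0,1}, W(b,z) + W(z,b) = 1 for z ≠ b with both nonzero, and W(b,0) = 1. -/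
theorem stmt_19 (Q c : ℕ) (hc : 1 ≤ c) (T : ℕ → ℝ)
    (hT : Set.InjOn T (Set.Iic c)) :
    -- `W b z = 1` iff `b` is ranked better than `z` (a zero count is worse than any
    -- nonzero count; for nonzero counts the ranking is by the score `T`).
    let W : ℕ → ℕ → ℝ := fun b z => if z = 0 ∨ (b ≠ 0 ∧ T b < T z) then 1 else 0
    -- the μ̃-minimizing attack: choose uniformly among the received symbols whose
    -- occurrence count minimizes `T` over all received (nonzero-count) symbols.
    let θ : (Fin (Q + 1) → ℕ) → Fin (Q + 1) → ℝ := fun σ y =>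
      if σ y ≠ 0 ∧ ∀ α, σ α ≠ 0 → T (σ y) ≤ T (σ α)
      then 1 / ((Finset.univ.filter (fun α => σ α = σ y)).card : ℝ)
      else 0
    (∀ b z, W b z = 0 ∨ W b z = 1) ∧
    (∀ b, W b 0 = 1) ∧
    (∀ b z, b ≤ c → z ≤ c → b ≠ 0 → z ≠ 0 → b ≠ z → W b z + W z b = 1) ∧
    (∀ σ : Fin (Q + 1) → ℕ, (∑ a, σ a) = c → ∀ α : Fin (Q + 1), σ α ≠ 0 →
      θ σ α
        = (1 / (((Finset.univ.filter (fun i => σ (α.succAbove i) = σ α)).card : ℝ) + 1))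
            * ∏ i ∈ Finset.univ.filter (fun i => σ (α.succAbove i) ≠ σ α),
                W (σ α) (σ (α.succAbove i))) := by
  intro W θ
  refine ⟨?_, ?_, ?_, ?_⟩
  · intro b z
    by_cases h : z = 0 ∨ (b ≠ 0 ∧ T b < T z)
    · right; simp [W, h]
    · left; simp [W, h]
  · intro b; simp [W]
  · intro b z hb hz hb0 hz0 hbz
    have hTbz : T b ≠ T z := fun h => hbz (hT hb hz h)
    rcases lt_or_gt_of_ne hTbz with h | h
    · simp [W, hz0, hb0, h, not_lt.mpr h.le]
    · simp [W, hz0, hb0, h, not_lt.mpr h.le]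
  · intro σ hσ α hα
    have hle : ∀ a, σ a ≤ c := by
      intro a
      rw [← hσ]
      exact Finset.single_le_sum (fun i _ => Nat.zero_le _) (Finset.mem_univ a)
    -- card identity
    have hcard : (Finset.univ.filter (fun β => σ β = σ α)).card
        = (Finset.univ.filter (fun i => σ (α.succAbove i) = σ α)).card + 1 := by
      rw [Finset.card_filter, Finset.card_filter, Fin.sum_univ_succAbove _ α]
      simp [add_comm, eq_comm]
    by_cases hmin : ∀ β, σ β ≠ 0 → T (σ α) ≤ T (σ β)
    · have hθ : θ σ α = 1 / ((Finset.univ.filter (fun i => σ (α.succAbove i) = σ α)).card + 1 : ℝ) := by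
        simp only [θ]
        rw [if_pos ⟨hα, hmin⟩, hcard]
        push_cast
        ring
      rw [hθ]
      have hprod : ∏ i ∈ Finset.univ.filter (fun i => σ (α.succAbove i) ≠ σ α),
          W (σ α) (σ (α.succAbove i)) = 1 := by
        apply Finset.prod_eq_one
        intro i hi
        simp only [Finset.mem_filter] at hi
        by_cases hz : σ (α.succAbove i) = 0
        · simp [W, hz]
        · have hlt : T (σ α) < T (σ (α.succAbove i)) := by
            refine lt_of_le_of_ne (hmin _ hz) ?_
            intro h
            exact hi.2 ((hT (hle α) (hle _) h).symm)
          simp [W, hα, hlt]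
      rw [hprod, mul_one]
    · -- θ = 0 and some factor is 0
      have hθ : θ σ α = 0 := by
        simp only [θ]
        rw [if_neg]
        rintro ⟨-, h⟩
        exact hmin h
      rw [hθ]
      push_neg at hmin
      obtain ⟨β, hβ0, hβlt⟩ := hmin
      have hβne : σ β ≠ σ α := fun h => lt_irrefl _ (h ▸ hβlt)
      have hβα : β ≠ α := fun h => hβne (by rw [h])
      obtain ⟨j, hj⟩ := Fin.exists_succAbove_eq hβα
      have hjmem : j ∈ Finset.univ.filter (fun i => σ (α.succAbove i) ≠ σ α) := by
        simp [hj, hβne]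
      have : ∏ i ∈ Finset.univ.filter (fun i => σ (α.succAbove i) ≠ σ α),
          W (σ α) (σ (α.succAbove i)) = 0 := by
        apply Finset.prod_eq_zero hjmem
        rw [hj]
        simp only [W]
        rw [if_neg]
        push_neg
        exact ⟨hβ0, fun _ => hβlt.le⟩
      rw [this, mul_zero]
end
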